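/- Let p ≥ 1 be an integer, let k0,...,k(p-1) be positive integers, and set 𝒫 = 𝒫(k0,...,k(p-1)) and 𝒫' = 𝒫(k1,...,k(p-1)). Then for every positive divisor d of 𝒫 there exists a positive integer m such that 𝒫 / gcd(m + 𝒫', 𝒫) = d. (In particular, every such value, including d = 1 and d = 𝒫, is attained as the index of an intermediate Kato surface with Dloussky sequence [s_{k0} ... s_{k(p-1)} r_m] for a suitable choice of m.) -/

import Mathlib

/-- `fpol k n = f(k 0, ..., k (n-1))`, the continuant-type polynomial:
`f() = 1`, `f(X₁) = X₁`, `f(X₁,...,Xₙ) = Xₙ·f(X₁,...,Xₙ₋₁) + f(X₁,...,Xₙ₋₂)`. -/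
def fpol (k : ℕ → ℤ) : ℕ → ℤ
  | 0 => 1
  | 1 => k 0
  | n + 2 => k (n + 1) * fpol k (n + 1) + fpol k n

/-- `Ppol k n = 𝒫(k 0, ..., k (n-1))`:
`𝒫() = 0`, `𝒫(X₁,...,Xₙ) = Xₙ·f(X₁,...,Xₙ₋₁) + 𝒫(X₁,...,Xₙ₋₁)`. -/
def Ppol (k : ℕ → ℤ) : ℕ → ℤ
  | 0 => 0
  | n + 1 => k n * fpol k n + Ppol k n

lemma fpol_pos (k : ℕ → ℤ) (p : ℕ) (hk : ∀ i < p, 0 < k i) :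
    ∀ n ≤ p, 0 < fpol k n := by
  intro n
  induction n using Nat.strong_induction_on with
  | _ n ih =>
    intro hn
    match n with
    | 0 => show (0:ℤ) < 1; norm_num
    | 1 => exact hk 0 (by omega)
    | n + 2 =>
      have h1 : 0 < fpol k (n + 1) := ih (n + 1) (by omega) (by omega)
      have h2 : 0 < fpol k n := ih n (by omega) (by omega)
      have h3 : 0 < k (n + 1) := hk (n + 1) (by omega)
      show 0 < k (n + 1) * fpol k (n + 1) + fpol k n
      positivity

lemma Ppol_pos (k : ℕ → ℤ) (p : ℕ) (hp : 1 ≤ p) (hk : ∀ i < p, 0 < k i) :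
    0 < Ppol k p := by
  induction p with
  | zero => omega
  | succ n ih =>
    have hf : 0 < fpol k n := fpol_pos k (n + 1) hk n (by omega)
    have hkn : 0 < k n := hk n (by omega)
    have hP : 0 ≤ Ppol k n := by
      rcases Nat.eq_zero_or_pos n with h | h
      · simp [h, Ppol]
      · exact le_of_lt (ih h (fun i hi => hk i (by omega)))
    show 0 < k n * fpol k n + Ppol k n
    positivity

theorem stmt7 (p : ℕ) (hp : 1 ≤ p) (k : ℕ → ℤ) (hk : ∀ i < p, 0 < k i) :
    ∀ d : ℤ, 0 < d → d ∣ Ppol k p →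
      ∃ m : ℤ, 0 < m ∧
        Ppol k p / (Int.gcd (m + Ppol (fun i => k (i + 1)) (p - 1)) (Ppol k p) : ℤ) = d := by
  intro d hd hdvd
  set P : ℤ := Ppol k p with hPdef
  set P' : ℤ := Ppol (fun i => k (i + 1)) (p - 1) with hP'def
  have hP : 0 < P := Ppol_pos k p hp hk
  set e : ℤ := P / d with he
  have hPe : P = d * e := by
    rw [he]; exact (Int.mul_ediv_cancel' hdvd).symm
  have hepos : 0 < e := by
    rcases lt_trichotomy e 0 with h | h | h
    · nlinarith
    · rw [h, mul_zero] at hPe; omega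
    · exact h
  have hedvd : e ∣ P := ⟨d, by linarith [hPe, mul_comm d e]⟩
  set N : ℤ := (P' - e).natAbs + 1 with hN
  refine ⟨e - P' + N * P, ?_, ?_⟩
  · have h1 : (P' - e) ≤ ((P' - e).natAbs : ℤ) := Int.le_natAbs
    have h2 : (1 : ℤ) ≤ P := hP
    have h3 : (0 : ℤ) ≤ ((P' - e).natAbs : ℤ) := Int.ofNat_nonneg _
    nlinarith
  · have harg : e - P' + N * P + P' = e + N * P := by ring
    rw [harg]
    have hg : Int.gcd (e + N * P) P = Int.gcd e P := by
      apply Nat.dvd_antisymm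
      · have ha : (Int.gcd (e + N * P) P : ℤ) ∣ e + N * P := Int.gcd_dvd_left _ _
        have hb : (Int.gcd (e + N * P) P : ℤ) ∣ P := Int.gcd_dvd_right _ _
        have h1 : (Int.gcd (e + N * P) P : ℤ) ∣ e := by
          have := dvd_sub ha (hb.mul_left N)
          simpa using this
        exact Int.natCast_dvd_natCast.mp (Int.dvd_coe_gcd h1 hb)
      · have ha : (Int.gcd e P : ℤ) ∣ e := Int.gcd_dvd_left _ _
        have hb : (Int.gcd e P : ℤ) ∣ P := Int.gcd_dvd_right _ _
        exact Int.natCast_dvd_natCast.mp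
          (Int.dvd_coe_gcd (dvd_add ha (hb.mul_left N)) hb)
    rw [hg]
    have hge : (Int.gcd e P : ℤ) = e := by
      rw [Int.gcd_eq_left hepos.le hedvd]
    rw [hge]
    rw [hPe, Int.mul_ediv_cancel _ (ne_of_gt hepos)]
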